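/- arXiv:math/0404002 — 3 statements merged into one kernel-verified Lean document; each statement's English description precedes it below -/
import Mathlib

section
/- For y > 0, the derivative with respect to s at s = 1 of ∫_1^∞ (t²-1)^{s-1} e^{-2πty} dt equals (1/(2πy))(Γ(0,4πy) e^{2πy} + (Γ'(1) - log(πy)) e^{-2πy}). -/
/-!
Differentiating under the integral sign, the derivative at `s = 1` is
`∫_1^∞ log (t² - 1) e^{-ct} dt` with `c = 2πy`; the domination comes from
`|log b| b^e ≤ 8 (b^{3/4} + b^{-3/4})` for `|e| ≤ 1/2`. Writing
`log (t² - 1) = log (t - 1) + log (t + 1)` and shifting, the first piece is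
`e^{-c} ∫_0^∞ log u e^{-cu} du = e^{-c} (Γ'(1) - log c) / c` by scaling, and the second is
`e^c ∫_2^∞ log v e^{-cv} dv`, which one integration by parts turns into
`(e^{-c} log 2 + e^c Γ(0, 2c)) / c`.
-/

open Real MeasureTheory Set

/-- The incomplete gamma function `Γ(0,a) = ∫_a^∞ e^{-t} t^{-1} dt`. -/
noncomputable def incGammaZero (a : ℝ) : ℝ := ∫ t in Ioi a, Real.exp (-t) / t

lemma abs_log_le_rpow_add_rpow_neg_div {x ε : ℝ} (hx : 0 < x) (hε : 0 < ε) :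
    |log x| ≤ (x ^ ε + x ^ (-ε)) / ε := by
  have hpos := log_le_rpow_div hx.le hε
  have hneg := log_le_rpow_div (inv_pos.2 hx).le hε
  rw [log_inv, inv_rpow hx.le, ← rpow_neg hx.le] at hneg
  have : 0 ≤ x ^ ε / ε := by positivity
  have : 0 ≤ x ^ (-ε) / ε := by positivity
  rw [add_div, abs_le]
  constructor <;> linarith

lemma rpow_le_rpow_add_rpow_neg {b p q : ℝ} (hb : 0 < b) (hq : |q| ≤ p) :
    b ^ q ≤ b ^ p + b ^ (-p) := by
  obtain ⟨hpq, hqp⟩ := abs_le.1 hq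
  rcases le_or_gt 1 b with h | h
  · linarith [rpow_le_rpow_of_exponent_le h hqp, rpow_nonneg hb.le (-p)]
  · linarith [rpow_le_rpow_of_exponent_ge hb h.le hpq, rpow_nonneg hb.le p]

lemma abs_log_mul_rpow_le {b e δ ε : ℝ} (hb : 0 < b) (hε : 0 < ε) (he : |e| ≤ δ) :
    |log b| * b ^ e ≤ 2 / ε * (b ^ (δ + ε) + b ^ (-(δ + ε))) := by
  obtain ⟨hδe, heδ⟩ := abs_le.1 he
  have hplus : b ^ (ε + e) ≤ b ^ (δ + ε) + b ^ (-(δ + ε)) :=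
    rpow_le_rpow_add_rpow_neg hb (abs_le.2 ⟨by linarith, by linarith⟩)
  have hminus : b ^ (-ε + e) ≤ b ^ (δ + ε) + b ^ (-(δ + ε)) :=
    rpow_le_rpow_add_rpow_neg hb (abs_le.2 ⟨by linarith, by linarith⟩)
  calc |log b| * b ^ e ≤ (b ^ ε + b ^ (-ε)) / ε * b ^ e :=
        mul_le_mul_of_nonneg_right (abs_log_le_rpow_add_rpow_neg_div hb hε) (by positivity)
    _ = (b ^ (ε + e) + b ^ (-ε + e)) / ε := by rw [rpow_add hb, rpow_add hb]; ring
    _ ≤ 2 / ε * (b ^ (δ + ε) + b ^ (-(δ + ε))) := by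
        rw [div_mul_eq_mul_div, div_le_div_iff_of_pos_right hε]; linarith

lemma integrableOn_rpow_mul_exp_neg_mul_Ioi {c r : ℝ} (hc : 0 < c) (hr : -1 < r) :
    IntegrableOn (fun u : ℝ => u ^ r * exp (-(c * u))) (Ioi 0) := by
  simpa [rpow_one, neg_mul] using integrableOn_rpow_mul_exp_neg_mul_rpow hr one_pos hc

lemma integrableOn_log_mul_exp_neg_mul_Ioi {c : ℝ} (hc : 0 < c) :
    IntegrableOn (fun u : ℝ => log u * exp (-(c * u))) (Ioi 0) := by
  have hdom := ((integrableOn_rpow_mul_exp_neg_mul_Ioi hc (r := 1 / 2) (by norm_num)).add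
    (integrableOn_rpow_mul_exp_neg_mul_Ioi hc (r := -(1 / 2)) (by norm_num))).const_mul 2
  refine hdom.mono' (by fun_prop) ?_
  filter_upwards [ae_restrict_mem measurableSet_Ioi] with u (hu : 0 < u)
  have hlog := abs_log_le_rpow_add_rpow_neg_div hu (ε := 1 / 2) (by norm_num)
  rw [norm_mul, norm_eq_abs, norm_eq_abs, abs_exp]
  calc |log u| * exp (-(c * u))
      ≤ (u ^ (1 / 2 : ℝ) + u ^ (-(1 / 2) : ℝ)) / (1 / 2) * exp (-(c * u)) :=
        mul_le_mul_of_nonneg_right hlog (exp_pos _).le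
    _ = _ := by simp only [Pi.add_apply]; ring

lemma integral_Ioi_comp_add_right (f : ℝ → ℝ) (a d : ℝ) :
    ∫ x in Ioi a, f (x + d) = ∫ x in Ioi (a + d), f x := by
  simpa using (measurePreserving_add_right volume d).setIntegral_preimage_emb
    (MeasurableEquiv.addRight d).measurableEmbedding f (Ioi (a + d))

lemma integrableOn_Ioi_comp_add_right_iff (f : ℝ → ℝ) (a d : ℝ) :
    IntegrableOn (fun x => f (x + d)) (Ioi a) ↔ IntegrableOn f (Ioi (a + d)) := by
  simpa [Function.comp_def] using (measurePreserving_add_right volume d).integrableOn_comp_preimage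
    (MeasurableEquiv.addRight d).measurableEmbedding (f := f) (s := Ioi (a + d))

lemma comp_add_mul_exp_neg_mul_eq (g : ℝ → ℝ) (c d : ℝ) :
    (fun t => g (t + d) * exp (-(c * t)))
      = fun t => exp (c * d) * (g (t + d) * exp (-(c * (t + d)))) := by
  ext t
  rw [mul_left_comm, ← exp_add]
  ring_nf

lemma integral_Ioi_comp_add_right_mul_exp_neg_mul (g : ℝ → ℝ) (a c d : ℝ) :
    ∫ t in Ioi a, g (t + d) * exp (-(c * t))
      = exp (c * d) * ∫ v in Ioi (a + d), g v * exp (-(c * v)) := by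
  rw [comp_add_mul_exp_neg_mul_eq, integral_const_mul,
    integral_Ioi_comp_add_right (fun v => g v * exp (-(c * v)))]

lemma integrableOn_Ioi_comp_add_right_mul_exp_neg_mul {g : ℝ → ℝ} {a c : ℝ} (d : ℝ)
    (hg : IntegrableOn (fun v => g v * exp (-(c * v))) (Ioi (a + d))) :
    IntegrableOn (fun t => g (t + d) * exp (-(c * t))) (Ioi a) := by
  rw [comp_add_mul_exp_neg_mul_eq]
  exact ((integrableOn_Ioi_comp_add_right_iff (fun v => g v * exp (-(c * v))) a d).2 hg).const_mul
    _

lemma integrableOn_sq_sub_one_rpow_mul_exp_neg_mul_of_nonneg {c r : ℝ} (hc : 0 < c)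
    (hr : 0 ≤ r) :
    IntegrableOn (fun t : ℝ => (t ^ 2 - 1) ^ r * exp (-(c * t))) (Ioi 1) := by
  have hdom := (integrableOn_rpow_mul_exp_neg_mul_Ioi hc (r := 2 * r) (by linarith)).mono_set
    (Ioi_subset_Ioi zero_le_one)
  refine hdom.mono' (by fun_prop) ?_
  filter_upwards [ae_restrict_mem measurableSet_Ioi] with t (ht : 1 < t)
  have hbase : 0 ≤ t ^ 2 - 1 := by nlinarith
  rw [norm_mul, norm_eq_abs, norm_eq_abs, abs_exp, abs_of_nonneg (rpow_nonneg hbase r),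
    rpow_mul (by linarith), rpow_two]
  gcongr
  linarith

lemma integrableOn_sq_sub_one_rpow_mul_exp_neg_mul_of_nonpos {c r : ℝ} (hc : 0 < c)
    (hr : -1 < r) (hr0 : r ≤ 0) :
    IntegrableOn (fun t : ℝ => (t ^ 2 - 1) ^ r * exp (-(c * t))) (Ioi 1) := by
  have hdom := integrableOn_Ioi_comp_add_right_mul_exp_neg_mul (a := 1) (-1)
    (by simpa using integrableOn_rpow_mul_exp_neg_mul_Ioi hc hr)
  refine hdom.mono' (by fun_prop) ?_
  filter_upwards [ae_restrict_mem measurableSet_Ioi] with t (ht : 1 < t)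
  rw [norm_mul, norm_eq_abs, norm_eq_abs, abs_exp, show t ^ 2 - 1 = (t + -1) * (t + 1) by ring,
    mul_rpow (by linarith) (by linarith), abs_of_nonneg
    (mul_nonneg (rpow_nonneg (by linarith) r) (rpow_nonneg (by linarith) r))]
  gcongr
  exact mul_le_of_le_one_right (rpow_nonneg (by linarith) r)
    (rpow_le_one_of_one_le_of_nonpos (by linarith) hr0)

lemma integrableOn_sq_sub_one_rpow_mul_exp_neg_mul {c r : ℝ} (hc : 0 < c) (hr : -1 < r) :
    IntegrableOn (fun t : ℝ => (t ^ 2 - 1) ^ r * exp (-(c * t))) (Ioi 1) := by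
  rcases le_total 0 r with hr0 | hr0
  · exact integrableOn_sq_sub_one_rpow_mul_exp_neg_mul_of_nonneg hc hr0
  · exact integrableOn_sq_sub_one_rpow_mul_exp_neg_mul_of_nonpos hc hr hr0

lemma hasDerivAt_integral_sq_sub_one_rpow_mul_exp_neg_mul {c : ℝ} (hc : 0 < c) :
    HasDerivAt (fun s : ℝ => ∫ t in Ioi (1 : ℝ), (t ^ 2 - 1) ^ (s - 1) * exp (-(c * t)))
      (∫ t in Ioi (1 : ℝ), log (t ^ 2 - 1) * exp (-(c * t))) 1 := by
  have hbase : ∀ t ∈ Ioi (1 : ℝ), 0 < t ^ 2 - 1 := fun t (ht : 1 < t) => by nlinarith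
  -- `abs_log_mul_rpow_le` with `δ = 1/2`, `ε = 1/4`: the exponents `±3/4` stay above `-1`.
  have h_bound : ∀ᵐ t ∂(volume.restrict (Ioi (1 : ℝ))), ∀ s ∈ Icc (1 / 2 : ℝ) (3 / 2),
      ‖(t ^ 2 - 1) ^ (s - 1) * log (t ^ 2 - 1) * exp (-(c * t))‖
        ≤ 2 / (1 / 4) * ((t ^ 2 - 1) ^ (1 / 2 + 1 / 4 : ℝ)
          + (t ^ 2 - 1) ^ (-(1 / 2 + 1 / 4) : ℝ)) * exp (-(c * t)) := by
    filter_upwards [ae_restrict_mem measurableSet_Ioi] with t ht s ⟨hs₁, hs₂⟩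
    have hlog := abs_log_mul_rpow_le (hbase t ht) (ε := 1 / 4) (by norm_num)
      (abs_le.2 ⟨by linarith, by linarith⟩ : |s - 1| ≤ 1 / 2)
    rw [norm_mul, norm_mul, norm_eq_abs, norm_eq_abs, norm_eq_abs, abs_exp,
      abs_of_pos (rpow_pos_of_pos (hbase t ht) _), mul_comm ((t ^ 2 - 1) ^ (s - 1))]
    gcongr
  have bound_integrable : IntegrableOn (fun t : ℝ => 2 / (1 / 4)
      * ((t ^ 2 - 1) ^ (1 / 2 + 1 / 4 : ℝ) + (t ^ 2 - 1) ^ (-(1 / 2 + 1 / 4) : ℝ))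
      * exp (-(c * t))) (Ioi 1) := by
    have h : IntegrableOn _ (Ioi (1 : ℝ)) :=
      ((integrableOn_sq_sub_one_rpow_mul_exp_neg_mul hc (r := 1 / 2 + 1 / 4) (by norm_num)).add
        (integrableOn_sq_sub_one_rpow_mul_exp_neg_mul hc (r := -(1 / 2 + 1 / 4))
          (by norm_num))).const_mul (2 / (1 / 4))
    refine h.congr_fun (fun t _ => ?_) measurableSet_Ioi
    simp only [Pi.add_apply]
    ring
  have h_diff : ∀ᵐ t ∂(volume.restrict (Ioi (1 : ℝ))), ∀ s ∈ Icc (1 / 2 : ℝ) (3 / 2),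
      HasDerivAt (fun s : ℝ => (t ^ 2 - 1) ^ (s - 1) * exp (-(c * t)))
        ((t ^ 2 - 1) ^ (s - 1) * log (t ^ 2 - 1) * exp (-(c * t))) s := by
    filter_upwards [ae_restrict_mem measurableSet_Ioi] with t ht s _
    simpa using (((hasStrictDerivAt_const_rpow (hbase t ht) (s - 1)).hasDerivAt.comp s
      ((hasDerivAt_id s).sub_const 1)).mul_const (exp (-(c * t))))
  have key := hasDerivAt_integral_of_dominated_loc_of_deriv_le (x₀ := (1 : ℝ))
    (Icc_mem_nhds (by norm_num) (by norm_num)) (Filter.Eventually.of_forall fun s => by fun_prop)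
    (by simpa [IntegrableOn] using integrableOn_exp_mul_Ioi (neg_neg_of_pos hc) 1) (by fun_prop)
    h_bound bound_integrable h_diff
  simpa using key.2

lemma integral_log_mul_exp_neg_mul_Ioi_zero {c : ℝ} (hc : 0 < c) :
    ∫ u in Ioi (0 : ℝ), log u * exp (-(c * u))
      = c⁻¹ * ((∫ u in Ioi (0 : ℝ), exp (-u) * log u) - log c) := by
  have hscale := integral_comp_mul_left_Ioi (fun v => exp (-v) * log v) 0 hc
  have hexp_int : IntegrableOn (fun u => exp (-(c * u))) (Ioi 0) := by
    simpa using integrableOn_exp_mul_Ioi (neg_neg_of_pos hc) 0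
  have hexp : ∫ u in Ioi (0 : ℝ), exp (-(c * u)) = c⁻¹ := by
    simpa using integral_exp_mul_Ioi (neg_neg_of_pos hc) 0
  have hsplit : ∫ u in Ioi (0 : ℝ), exp (-(c * u)) * log (c * u)
      = log c * (∫ u in Ioi (0 : ℝ), exp (-(c * u)))
        + ∫ u in Ioi (0 : ℝ), log u * exp (-(c * u)) := by
    rw [← integral_const_mul, ← integral_add (hexp_int.const_mul _)
      (integrableOn_log_mul_exp_neg_mul_Ioi hc)]
    refine setIntegral_congr_fun measurableSet_Ioi fun u (hu : 0 < u) => ?_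
    rw [log_mul hc.ne' hu.ne']
    ring
  rw [mul_zero, smul_eq_mul, hsplit, hexp] at hscale
  linear_combination hscale

lemma tendsto_log_mul_exp_neg_mul_atTop {c : ℝ} (hc : 0 < c) :
    Filter.Tendsto (fun v => log v * exp (-(c * v))) Filter.atTop (nhds 0) := by
  have hlin : Filter.Tendsto (fun v => v * exp (-(c * v))) Filter.atTop (nhds 0) := by
    simpa using tendsto_rpow_mul_exp_neg_mul_atTop_nhds_zero 1 c hc
  refine squeeze_zero' ?_ ?_ hlin <;> filter_upwards [Filter.eventually_ge_atTop 1] with v hv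
  · exact mul_nonneg (log_nonneg hv) (exp_pos _).le
  · exact mul_le_mul_of_nonneg_right ((log_le_sub_one_of_pos (by linarith)).trans (by linarith))
      (exp_pos _).le

lemma integral_log_mul_exp_neg_mul_Ioi {a c : ℝ} (ha : 0 < a) (hc : 0 < c) :
    ∫ v in Ioi a, log v * exp (-(c * v))
      = c⁻¹ * (log a * exp (-(c * a)) + incGammaZero (c * a)) := by
  have hlog_int : IntegrableOn (fun v => log v * exp (-(c * v))) (Ioi a) :=
    (integrableOn_log_mul_exp_neg_mul_Ioi hc).mono_set (Ioi_subset_Ioi ha.le)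
  have hdiv_int : IntegrableOn (fun v => exp (-(c * v)) / (c * v)) (Ioi a) := by
    refine ((integrableOn_exp_mul_Ioi (neg_neg_of_pos hc) a).const_mul (c * a)⁻¹).mono'
      (by fun_prop : Measurable fun v => exp (-(c * v)) / (c * v)).aestronglyMeasurable ?_
    filter_upwards [ae_restrict_mem measurableSet_Ioi] with v (hv : a < v)
    have hv0 : 0 < v := ha.trans hv
    rw [norm_eq_abs, abs_of_pos (by positivity), div_eq_inv_mul, neg_mul]
    gcongr
  have hderiv : ∀ v ∈ Ici a, HasDerivAt (fun v => -c⁻¹ * (log v * exp (-(c * v))))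
      (log v * exp (-(c * v)) - exp (-(c * v)) / (c * v)) v := by
    intro v (hv : a ≤ v)
    have hv0 : v ≠ 0 := (ha.trans_le hv).ne'
    have hexp : HasDerivAt (fun v => exp (-(c * v))) (exp (-(c * v)) * -c) v := by
      simpa using ((hasDerivAt_id v).const_mul c).neg.exp
    refine (((hasDerivAt_log hv0).mul hexp).const_mul (-c⁻¹)).congr_deriv ?_
    field_simp
    ring
  have hparts := integral_Ioi_of_hasDerivAt_of_tendsto' hderiv (hlog_int.sub hdiv_int)
    (by simpa using (tendsto_log_mul_exp_neg_mul_atTop hc).const_mul (-c⁻¹))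
  have hgamma := integral_comp_mul_left_Ioi (fun x => exp (-x) / x) a hc
  rw [integral_sub hlog_int hdiv_int] at hparts
  rw [← incGammaZero, smul_eq_mul] at hgamma
  rw [hgamma] at hparts
  linear_combination hparts

lemma integral_log_sq_sub_one_mul_exp_neg_mul {c : ℝ} (hc : 0 < c) :
    ∫ t in Ioi (1 : ℝ), log (t ^ 2 - 1) * exp (-(c * t))
      = c⁻¹ * (incGammaZero (2 * c) * exp c
        + ((∫ u in Ioi (0 : ℝ), exp (-u) * log u) - log (c / 2)) * exp (-c)) := by
  have hleft := integrableOn_Ioi_comp_add_right_mul_exp_neg_mul (a := 1) (-1)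
    (by simpa using integrableOn_log_mul_exp_neg_mul_Ioi hc)
  have hright := integrableOn_Ioi_comp_add_right_mul_exp_neg_mul (a := 1) 1
    ((integrableOn_log_mul_exp_neg_mul_Ioi hc).mono_set (Ioi_subset_Ioi (by norm_num)))
  have hsplit : ∫ t in Ioi (1 : ℝ), log (t ^ 2 - 1) * exp (-(c * t))
      = (∫ t in Ioi (1 : ℝ), log (t + -1) * exp (-(c * t)))
        + ∫ t in Ioi (1 : ℝ), log (t + 1) * exp (-(c * t)) := by
    rw [← integral_add hleft hright]
    refine setIntegral_congr_fun measurableSet_Ioi fun t (ht : 1 < t) => ?_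
    rw [show t ^ 2 - 1 = (t + -1) * (t + 1) by ring, log_mul (by linarith) (by linarith)]
    ring
  rw [hsplit, integral_Ioi_comp_add_right_mul_exp_neg_mul log,
    integral_Ioi_comp_add_right_mul_exp_neg_mul log, show (1 : ℝ) + -1 = 0 by norm_num,
    show (1 : ℝ) + 1 = 2 by norm_num, integral_log_mul_exp_neg_mul_Ioi_zero hc,
    integral_log_mul_exp_neg_mul_Ioi two_pos hc, log_div hc.ne' two_ne_zero, mul_comm c 2,
    mul_neg_one, mul_one]
  have hexp : exp c * exp (-(2 * c)) = exp (-c) := by rw [← exp_add]; ring_nf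
  linear_combination c⁻¹ * log 2 * hexp

/-- For `y > 0`, the derivative with respect to `s` at `s = 1` of
`∫_1^∞ (t²-1)^{s-1} e^{-2πty} dt` equals
`(1/(2πy)) (Γ(0,4πy) e^{2πy} + (Γ'(1) - log(πy)) e^{-2πy})`,
where `Γ'(1) = ∫_0^∞ e^{-u} log u du`. -/
theorem deriv_integral_rpow_exp (y : ℝ) (hy : 0 < y) :
    HasDerivAt (fun s : ℝ => ∫ t in Ioi (1 : ℝ), (t ^ 2 - 1) ^ (s - 1) * Real.exp (-(2 * π * t * y)))
      ((1 / (2 * π * y)) * (incGammaZero (4 * π * y) * Real.exp (2 * π * y)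
        + ((∫ u in Ioi (0 : ℝ), Real.exp (-u) * Real.log u) - Real.log (π * y))
          * Real.exp (-(2 * π * y)))) 1 := by
  have hc : 0 < 2 * π * y := by positivity
  have hderiv := hasDerivAt_integral_sq_sub_one_rpow_mul_exp_neg_mul hc
  rw [integral_log_sq_sub_one_mul_exp_neg_mul hc, show 2 * (2 * π * y) = 4 * π * y by ring,
    show 2 * π * y / 2 = π * y by ring, ← one_div] at hderiv
  simpa only [mul_right_comm _ _ y] using hderiv
end

section
/- Let W*(z) = Γ(0, 4πy) e^{4πy} e^{2πiz} for z = x + iy in the upper half plane. Then for n ≥ 1, (d/dz) W*(nz) = (i/(2y)) e^{2πinz}, where d/dz = (1/2)(∂/∂x - i∂/∂y). -/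
open Real MeasureTheory Set Complex

/-- `W*(z) = Γ(0,4πy) e^{4πy} e^{2πiz}` for `z = x+iy`. -/
noncomputable def Wstar (z : ℂ) : ℂ :=
  (incGammaZero (4 * π * z.im) : ℂ) * Real.exp (4 * π * z.im) * Complex.exp (2 * π * I * z)

/-- The Wirtinger derivative `d/dz = (1/2)(∂/∂x - i ∂/∂y)`. -/
noncomputable def wdz (f : ℂ → ℂ) (z : ℂ) : ℂ :=
  (1 / 2) * (fderiv ℝ f z 1 - I * fderiv ℝ f z I)

/-! Write `W*(nz) = A(y) e(nz)` with `A(y) = Γ(0,4πny) e^{4πny}`. The factor `e(nz)` is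
holomorphic, so `d/dz` acts on it as `2πin`, while on a function of `y` alone `d/dz = -(i/2) d/dy`.
Since `Γ(0,·)' (a) = -e^{-a}/a`, we get `A'(y) = 4πn A(y) - 1/y`, and in the Leibniz rule the two
terms carrying `A(y)` cancel, leaving `(i/(2y)) e(nz)`. -/

lemma integrableOn_exp_neg_div_Ioi {c : ℝ} (hc : 0 < c) :
    IntegrableOn (fun t => Real.exp (-t) / t) (Ioi c) := by
  refine ((exp_neg_integrableOn_Ioi c one_pos).const_mul c⁻¹).mono' ?_ ?_
  · exact ((Real.measurable_exp.comp measurable_neg).div measurable_id).aestronglyMeasurable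
  · filter_upwards [ae_restrict_mem measurableSet_Ioi] with t (ht : c < t)
    have ht0 : 0 < t := hc.trans ht
    rw [Real.norm_of_nonneg (by positivity), neg_one_mul, ← div_eq_inv_mul]
    exact div_le_div_of_nonneg_left (Real.exp_pos _).le hc ht.le

lemma hasDerivAt_incGammaZero {a : ℝ} (ha : 0 < a) :
    HasDerivAt incGammaZero (-(Real.exp (-a) / a)) a := by
  have hcont : ContinuousAt (fun t => Real.exp (-t) / t) a := by fun_prop (disch := positivity)
  have hsplit : ∀ᶠ u in nhds a, (∫ t in u..a, Real.exp (-t) / t) + incGammaZero a = incGammaZero u :=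
    Filter.mem_of_superset (Ioi_mem_nhds ha) fun u (hu : 0 < u) =>
      intervalIntegral.integral_interval_add_Ioi (integrableOn_exp_neg_div_Ioi hu)
        (integrableOn_exp_neg_div_Ioi ha)
  refine HasDerivAt.congr_of_eventuallyEq ?_ (hsplit.mono fun _ h => h.symm)
  refine (intervalIntegral.integral_hasDerivAt_left (IntervalIntegrable.refl) ?_ hcont).add_const _
  exact ((Real.measurable_exp.comp measurable_neg).div measurable_id).stronglyMeasurable
    |>.stronglyMeasurableAtFilter

lemma hasDerivAt_incGammaZero_mul_exp {c y : ℝ} (hc : 0 < c) (hy : 0 < y) :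
    HasDerivAt (fun t => incGammaZero (c * t) * Real.exp (c * t))
      (c * (incGammaZero (c * y) * Real.exp (c * y)) - 1 / y) y := by
  have hlin : HasDerivAt (fun t => c * t) c y := by simpa using (hasDerivAt_id y).const_mul c
  refine (((hasDerivAt_incGammaZero (mul_pos hc hy)).comp y hlin).mul
    ((Real.hasDerivAt_exp _).comp y hlin)).congr_deriv ?_
  simp only [Function.comp_apply, Real.exp_neg]
  field_simp
  ring

lemma Wstar_ofReal_mul (r : ℝ) (w : ℂ) :
    Wstar (r * w) = ((incGammaZero (4 * π * r * w.im) * Real.exp (4 * π * r * w.im) : ℝ) : ℂ) *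
      Complex.exp (2 * π * I * r * w) := by
  simp only [Wstar, im_ofReal_mul, ofReal_mul, mul_assoc]

lemma wdz_eq_of_hasFDerivAt {f : ℂ → ℂ} {f' : ℂ →L[ℝ] ℂ} {z : ℂ} (h : HasFDerivAt f f' z) :
    wdz f z = (1 / 2) * (f' 1 - I * f' I) := by
  rw [wdz, h.fderiv]

lemma HasDerivAt.wdz_eq {f : ℂ → ℂ} {f' z : ℂ} (h : HasDerivAt f f' z) : wdz f z = f' := by
  rw [wdz_eq_of_hasFDerivAt (h.hasFDerivAt.restrictScalars ℝ)]
  simp only [ContinuousLinearMap.coe_restrictScalars', ContinuousLinearMap.toSpanSingleton_apply,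
    smul_eq_mul]
  linear_combination (-(1 / 2) * f') * I_sq

lemma HasDerivAt.wdz_ofReal_comp_im {g : ℝ → ℝ} {g' : ℝ} {z : ℂ} (h : HasDerivAt g g' z.im) :
    wdz (fun w => (g w.im : ℂ)) z = -(I / 2) * g' := by
  have hfd := ofRealCLM.hasFDerivAt.comp z (h.hasFDerivAt.comp z imCLM.hasFDerivAt)
  rw [wdz_eq_of_hasFDerivAt (f := fun w => (g w.im : ℂ)) hfd]
  simp only [ContinuousLinearMap.comp_apply, imCLM_apply, one_im, I_im,
    ContinuousLinearMap.toSpanSingleton_apply, smul_eq_mul, ofRealCLM_apply]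
  push_cast
  ring

lemma wdz_mul {f g : ℂ → ℂ} {z : ℂ} (hf : DifferentiableAt ℝ f z) (hg : DifferentiableAt ℝ g z) :
    wdz (fun w => f w * g w) z = wdz f z * g z + f z * wdz g z := by
  rw [wdz, fderiv_fun_mul hf hg, wdz, wdz]
  simp only [_root_.add_apply, _root_.smul_apply, smul_eq_mul]
  ring

/-- For `n ≥ 1` and `z` in the upper half plane,
`(d/dz) W*(nz) = (i/(2y)) e^{2πinz}`. -/
theorem wdz_Wstar (n : ℕ) (hn : 1 ≤ n) (z : ℂ) (hz : 0 < z.im) :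
    wdz (fun w => Wstar (n * w)) z = (I / (2 * z.im)) * Complex.exp (2 * π * I * n * z) := by
  set A : ℝ → ℝ := fun t => incGammaZero (4 * π * n * t) * Real.exp (4 * π * n * t)
  have hA : HasDerivAt A (4 * π * n * A z.im - 1 / z.im) z.im :=
    hasDerivAt_incGammaZero_mul_exp (by positivity) hz
  have hE : HasDerivAt (fun w => Complex.exp (2 * π * I * n * w))
      (2 * π * I * n * Complex.exp (2 * π * I * n * z)) z := by
    simpa [mul_comm] using ((hasDerivAt_id z).const_mul (2 * π * I * n)).cexp
  have hW : (fun w => Wstar (n * w)) = fun w => (A w.im : ℂ) * Complex.exp (2 * π * I * n * w) :=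
    funext fun w => by simpa [A] using Wstar_ofReal_mul n w
  rw [hW, wdz_mul (f := fun w => (A w.im : ℂ)) (ofRealCLM.differentiableAt.comp z
      (hA.differentiableAt.comp z imCLM.differentiableAt)) (hE.differentiableAt.restrictScalars ℝ),
    hA.wdz_ofReal_comp_im, hE.wdz_eq]
  push_cast
  field_simp
  ring
end

section
/- Let g be a holomorphic function on the upper half plane satisfying g(z+1) = g(z), with Fourier expansion g(z) = Σ_{n≥1} a_n e^{2πinz}, and suppose |g(z)| ≤ C/y for all z = x+iy. Then for every z in the upper half plane, |∫_{i∞}^z g(w) dw| ≪ |log y| + 1, with implied constant depending only on C, where the integral is taken along the vertical line from i∞ to z. -/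
/-!
On `Im z > 1/2` the bound `‖g z‖ ≤ C / Im z` gives `‖g‖ ≤ 2C`, and `g z = F (e^{2πiz})` with `F`
holomorphic on the disc `‖q‖ < e^{-π}` and `F 0 = 0`; Schwarz's lemma then upgrades the bound to
`‖g z‖ ≤ 2C e^{-Im z}` for `Im z ≥ 1`. Along the vertical line, `C/t` integrates to at most
`C |log y|` over `(y, max y 1]`, and the exponential tail contributes at most `2C`.
-/

open Real Complex MeasureTheory Set

/-- The antiderivative `F(z) = ∫_{i∞}^z g(w) dw` along the vertical line through `z`:
parametrizing `w = Re z + it`, `t ∈ (Im z, ∞)`, gives `F(z) = -i ∫_{Im z}^∞ g(Re z + it) dt`. -/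
noncomputable def vertAntideriv (g : ℂ → ℂ) (z : ℂ) : ℂ :=
  -I * ∫ t in Ioi z.im, g (z.re + t * I)

open Filter Metric

namespace Function.Periodic

variable {f : ℂ → ℂ} {h y₀ M : ℝ}

lemma lt_im_invQParam (hh : 0 < h) {q : ℂ} (hq0 : q ≠ 0)
    (hq : ‖q‖ < Real.exp (-2 * π * y₀ / h)) : y₀ < (invQParam h q).im := by
  have hlog : Real.log ‖q‖ < -2 * π * y₀ / h := by
    simpa using Real.log_lt_log (norm_pos_iff.mpr hq0) hq
  rw [im_invQParam]
  have : 0 < h / (2 * π) := by positivity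
  calc y₀ = -(h / (2 * π)) * (-2 * π * y₀ / h) := by field_simp
    _ < -h / (2 * π) * Real.log ‖q‖ := by rw [neg_div]; nlinarith

/-- Schwarz's lemma for the cusp function, which vanishes at `0`, on the disc
`‖q‖ < exp (-2πy₀/h)`. -/
theorem norm_le_mul_exp_of_norm_le (hh : 0 < h) (hf : Periodic f h)
    (hd : ∀ z : ℂ, y₀ < z.im → DifferentiableAt ℂ f z)
    (hzero : ZeroAtFilter (comap im atTop) f) (hM : ∀ z : ℂ, y₀ < z.im → ‖f z‖ ≤ M)
    {z : ℂ} (hz : y₀ < z.im) : ‖f z‖ ≤ M * Real.exp (-2 * π * (z.im - y₀) / h) := by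
  set r := Real.exp (-2 * π * y₀ / h)
  have hF0 : cuspFunction h f 0 = 0 := cuspFunction_zero_of_zero_at_inf hh hzero
  have hdF : DifferentiableOn ℂ (cuspFunction h f) (ball 0 r) := by
    intro q hq
    rw [mem_ball_zero_iff] at hq
    refine DifferentiableAt.differentiableWithinAt ?_
    rcases eq_or_ne q 0 with rfl | hq0
    · refine differentiableAt_cuspFunction_zero hh hf ?_ hzero.boundedAtFilter
      exact (tendsto_comap.eventually_gt_atTop y₀).mono hd
    · rw [← qParam_right_inv hh.ne' hq0]
      exact differentiableAt_cuspFunction hh.ne' hf (hd _ (lt_im_invQParam hh hq0 hq))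
  have hmaps : MapsTo (cuspFunction h f) (ball 0 r) (closedBall 0 M) := by
    intro q hq
    rw [mem_ball_zero_iff] at hq
    rw [mem_closedBall_zero_iff]
    rcases eq_or_ne q 0 with rfl | hq0
    · rw [hF0, norm_zero]
      exact (norm_nonneg _).trans (hM _ hz)
    · rw [cuspFunction_eq_of_nonzero h f hq0]
      exact hM _ (lt_im_invQParam hh hq0 hq)
  have hq : ‖qParam h z‖ < r := by
    rw [norm_qParam, Real.exp_lt_exp]
    exact div_lt_div_of_pos_right (by nlinarith [pi_pos]) hh
  have := Complex.dist_le_div_mul_dist_of_mapsTo_ball hdF (by rwa [hF0]) (mem_ball_zero_iff.mpr hq)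
  rw [hF0, dist_zero_right, dist_zero_right, eq_cuspFunction hh.ne' hf, norm_qParam] at this
  refine this.trans_eq ?_
  rw [div_mul_eq_mul_div, mul_div_assoc, ← Real.exp_sub]
  ring_nf

end Function.Periodic

section

variable {E : Type*} [NormedAddCommGroup E] {φ : ℝ → E} {C K y b : ℝ}

lemma integrableOn_const_div_Ioc (hy : 0 < y) : IntegrableOn (fun t : ℝ => C / t) (Ioc y b) := by
  rcases le_total y b with hyb | hby
  · rw [← intervalIntegrable_iff_integrableOn_Ioc_of_le hyb]
    refine (intervalIntegral.intervalIntegrable_inv (fun t ht => ?_) continuousOn_id).const_mul C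
    exact (hy.trans_le (uIcc_of_le hyb ▸ ht).1).ne'
  · simp [Ioc_eq_empty_of_le hby]

lemma integral_const_div_Ioc (hy : 0 < y) (hyb : y ≤ b) :
    ∫ t in Ioc y b, C / t = C * Real.log (b / y) := by
  simp only [← intervalIntegral.integral_of_le hyb, div_eq_mul_inv C,
    intervalIntegral.integral_const_mul, integral_inv_of_pos hy (hy.trans_le hyb)]

lemma setIntegral_norm_Ioc_le_mul_log (hy : 0 < y) (hyb : y ≤ b)
    (hφ : ∀ t ∈ Ioc y b, ‖φ t‖ ≤ C / t) : ∫ t in Ioc y b, ‖φ t‖ ≤ C * Real.log (b / y) :=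
  integral_const_div_Ioc hy hyb ▸ integral_mono_of_nonneg (.of_forall fun _ => norm_nonneg _)
    (integrableOn_const_div_Ioc hy) (ae_restrict_of_forall_mem measurableSet_Ioc hφ)

lemma setIntegral_norm_Ioi_le_mul_exp (hφ : ∀ t ∈ Ioi b, ‖φ t‖ ≤ K * Real.exp (-t)) :
    ∫ t in Ioi b, ‖φ t‖ ≤ K * Real.exp (-b) := by
  rw [← integral_exp_neg_Ioi, ← integral_const_mul]
  exact integral_mono_of_nonneg (.of_forall fun _ => norm_nonneg _)
    ((integrableOn_exp_neg_Ioi b).const_mul K) (ae_restrict_of_forall_mem measurableSet_Ioi hφ)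

lemma log_max_one_div_le_abs_log (hy : 0 < y) : Real.log (max y 1 / y) ≤ |Real.log y| := by
  rcases le_total y 1 with hy1 | hy1
  · rw [max_eq_right hy1, one_div, Real.log_inv]
    exact neg_le_abs _
  · rw [max_eq_left hy1, div_self hy.ne', Real.log_one]
    exact abs_nonneg _

theorem norm_setIntegral_Ioi_le_mul_abs_log_add [NormedSpace ℝ E] (hC : 0 ≤ C) (hK : 0 ≤ K)
    (hy : 0 < y) (hφ : ContinuousOn φ (Ioi y)) (hsmall : ∀ t ∈ Ioi y, ‖φ t‖ ≤ C / t)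
    (hlarge : ∀ t, 1 ≤ t → ‖φ t‖ ≤ K * Real.exp (-t)) :
    ‖∫ t in Ioi y, φ t‖ ≤ C * |Real.log y| + K := by
  set m := max y 1
  have hym : y ≤ m := le_max_left y 1
  have hsmall' : ∀ t ∈ Ioc y m, ‖φ t‖ ≤ C / t := fun t ht => hsmall t ht.1
  have hlarge' : ∀ t ∈ Ioi m, ‖φ t‖ ≤ K * Real.exp (-t) := fun t ht =>
    hlarge t ((le_max_right y 1).trans ht.le)
  have hmeas := hφ.aestronglyMeasurable (μ := volume) measurableSet_Ioi
  have hIoc : IntegrableOn φ (Ioc y m) :=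
    (integrableOn_const_div_Ioc hy).mono' (hmeas.mono_set Ioc_subset_Ioi_self)
      (ae_restrict_of_forall_mem measurableSet_Ioc hsmall')
  have hIoi : IntegrableOn φ (Ioi m) :=
    ((integrableOn_exp_neg_Ioi m).const_mul K).mono' (hmeas.mono_set (Ioi_subset_Ioi hym))
      (ae_restrict_of_forall_mem measurableSet_Ioi hlarge')
  calc ‖∫ t in Ioi y, φ t‖ = ‖(∫ t in Ioc y m, φ t) + ∫ t in Ioi m, φ t‖ := by
        rw [← setIntegral_union (Ioc_disjoint_Ioi le_rfl) measurableSet_Ioi hIoc hIoi,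
          Ioc_union_Ioi_eq_Ioi hym]
    _ ≤ (∫ t in Ioc y m, ‖φ t‖) + ∫ t in Ioi m, ‖φ t‖ :=
        (norm_add_le _ _).trans (add_le_add (norm_integral_le_integral_norm _)
          (norm_integral_le_integral_norm _))
    _ ≤ C * Real.log (m / y) + K * Real.exp (-m) :=
        add_le_add (setIntegral_norm_Ioc_le_mul_log hy hym hsmall')
          (setIntegral_norm_Ioi_le_mul_exp hlarge')
    _ ≤ C * |Real.log y| + K := by
        gcongr
        · exact log_max_one_div_le_abs_log hy
        · exact mul_le_of_le_one_right hK (Real.exp_le_one_iff.mpr (by simp [m]))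

end

theorem norm_le_two_mul_exp_neg_im {g : ℂ → ℂ} {C : ℝ}
    (hg : DifferentiableOn ℂ g {w : ℂ | 0 < w.im})
    (hper : ∀ z : ℂ, 0 < z.im → g (z + 1) = g z)
    (hbd : ∀ z : ℂ, 0 < z.im → ‖g z‖ ≤ C / z.im) {z : ℂ} (hz : 1 ≤ z.im) :
    ‖g z‖ ≤ 2 * C * Real.exp (-z.im) := by
  have hC : 0 ≤ C := by simpa using (norm_nonneg _).trans (hbd I (by simp))
  -- `g` is only periodic on the upper half plane, so extend it by zero below.
  set H : Set ℂ := {w : ℂ | 0 < w.im}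
  have hH : IsOpen H := isOpen_lt continuous_const continuous_im
  set f := H.indicator g
  have hf : Function.Periodic f (1 : ℝ) := fun w => by
    by_cases hw : 0 < w.im <;> simp [f, H, hw, hper]
  have hfg : ∀ w ∈ H, f w = g w := fun w hw => indicator_of_mem hw g
  have hd : ∀ w : ℂ, 1 / 2 < w.im → DifferentiableAt ℂ f w := fun w hw =>
    have hw0 : w ∈ H := one_half_pos.trans hw
    (hg.differentiableAt (hH.mem_nhds hw0)).congr_of_eventuallyEq
      (eventuallyEq_of_mem (hH.mem_nhds hw0) hfg)
  have hzero : ZeroAtFilter (comap im atTop) f := by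
    refine squeeze_zero_norm' ?_ ((tendsto_const_nhds (x := C)).div_atTop tendsto_comap)
    filter_upwards [tendsto_comap.eventually_gt_atTop 0] with w hw
    simpa [hfg w hw] using hbd w hw
  have hM : ∀ w : ℂ, 1 / 2 < w.im → ‖f w‖ ≤ 2 * C := fun w hw => by
    have hw0 : 0 < w.im := one_half_pos.trans hw
    calc ‖f w‖ = ‖g w‖ := by rw [hfg w hw0]
      _ ≤ C / w.im := hbd w hw0
      _ ≤ C / (1 / 2) := by gcongr
      _ = 2 * C := by ring
  calc ‖g z‖ = ‖f z‖ := by rw [hfg z (one_pos.trans_le hz)]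
    _ ≤ 2 * C * Real.exp (-2 * π * (z.im - 1 / 2) / 1) :=
        hf.norm_le_mul_exp_of_norm_le one_pos hd hzero hM (by linarith)
    _ ≤ 2 * C * Real.exp (-z.im) := by
        gcongr
        nlinarith [pi_gt_three]

lemma norm_vertAntideriv (g : ℂ → ℂ) (z : ℂ) :
    ‖vertAntideriv g z‖ = ‖∫ t in Ioi z.im, g (z.re + t * I)‖ := by
  simp [vertAntideriv]

/-- Let `g` be holomorphic on the upper half plane, `1`-periodic, with Fourier expansion
`g(z) = Σ_{n≥1} a_n e^{2πinz}`, and suppose `|g(z)| ≤ C/y`.  Then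
`|∫_{i∞}^z g| ≪ |log y| + 1`, with implied constant depending only on `C`. -/
theorem vertAntideriv_log_bound (C : ℝ) (hC : 0 ≤ C) :
    ∃ D : ℝ, 0 < D ∧ ∀ (g : ℂ → ℂ) (a : ℕ → ℂ),
      DifferentiableOn ℂ g {w : ℂ | 0 < w.im} →
      (∀ z : ℂ, 0 < z.im → g (z + 1) = g z) →
      (∀ z : ℂ, 0 < z.im → g z = ∑' n : ℕ, a (n + 1) * Complex.exp (2 * π * I * (n + 1) * z)) →
      (∀ z : ℂ, 0 < z.im → ‖g z‖ ≤ C / z.im) →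
      ∀ z : ℂ, 0 < z.im →
        ‖vertAntideriv g z‖ ≤ D * (|Real.log z.im| + 1) := by
  refine ⟨3 * C + 1, by positivity, fun g _ hg hper _ hbd z hz => ?_⟩
  have him (t : ℝ) : ((z.re : ℂ) + t * I).im = t := by simp
  have hline : ContinuousOn (fun t : ℝ => g (z.re + t * I)) (Ioi z.im) :=
    hg.continuousOn.comp (by fun_prop) fun t ht => by simpa [him] using hz.trans ht
  have hsmall (t : ℝ) (ht : t ∈ Ioi z.im) : ‖g (z.re + t * I)‖ ≤ C / t := by
    simpa [him] using hbd (z.re + t * I) (by simpa [him] using hz.trans ht)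
  have hlarge (t : ℝ) (ht : 1 ≤ t) :
      ‖g (z.re + t * I)‖ ≤ 2 * C * Real.exp (-t) := by
    simpa [him] using norm_le_two_mul_exp_neg_im hg hper hbd (z := z.re + t * I) (by simpa [him])
  calc ‖vertAntideriv g z‖ ≤ C * |Real.log z.im| + 2 * C := by
        rw [norm_vertAntideriv]
        exact norm_setIntegral_Ioi_le_mul_abs_log_add hC (by positivity) hz hline hsmall hlarge
    _ ≤ (3 * C + 1) * (|Real.log z.im| + 1) := by nlinarith [abs_nonneg (Real.log z.im)]
end
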